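/- Let X be a nonempty compact metric space and μ a finite Borel measure on X with full support (μ(U) > 0 for every nonempty open U ⊆ X). Let u, w : X → ℝ be continuous with min u = 0, max u = l > 0 and min w = 0, and suppose argmin(u) ∩ argmin(w) = ∅. For t ∈ [0,1] set h_t := min(t·l, u) + w (pointwise minimum with the constant t·l) and g(t) := ∫_X normalize(h_t) dμ. Then there exists δ₀ with 0 < δ₀ ≤ l such that for all t ∈ [0, δ₀/l]: (a) min h_t = t·l; (b) argmin(w) ⊆ argmin(h_t); (c) normalize(h_t) = w − max(t·l − u, 0) pointwise, so g(t) = ∫_X w dμ − ∫_X max(t·l − u, 0) dμ; (d) g is strictly decreasing on [0, δ₀/l]; (e) t ↦ osc(h_t) is monotone nonincreasing on [0, δ₀/l]. -/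

import Mathlib

open MeasureTheory Set

/-- The (attained) minimum of `f` on a nonempty compact space. -/
noncomputable def minF {X : Type*} (f : X → ℝ) : ℝ := sInf (Set.range f)

/-- The (attained) maximum of `f` on a nonempty compact space. -/
noncomputable def maxF {X : Type*} (f : X → ℝ) : ℝ := sSup (Set.range f)

/-- The oscillation `max f - min f`. -/
noncomputable def oscF {X : Type*} (f : X → ℝ) : ℝ := maxF f - minF f

/-- `normalize f = f - min f`. -/
noncomputable def normF {X : Type*} (f : X → ℝ) : X → ℝ := fun x => f x - minF f

/-- The minimizer set of `f`. -/
def argminF {X : Type*} (f : X → ℝ) : Set X := {x | f x = minF f}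

/-- The maximizer set of `f`. -/
def argmaxF {X : Type*} (f : X → ℝ) : Set X := {x | f x = maxF f}

/-!
Because the minimizers of `u` and `w` are disjoint, `c := min (u + w)` is positive; take
`δ₀ = min c l`. For `s = t·l ≤ c` the function `min s u + w` is at least `s` everywhere (where
`u < s` it equals `u + w ≥ c`), and it equals `s` on `argmin w`. So its minimum is `s`, which
gives (a)–(c). Then `g t = ∫ w - ∫ (t·l - u)⁺`, and the second integral is strictly increasing in
`t`: for `min u ≤ a < b` the continuous function `(b - u)⁺ - (a - u)⁺ ≥ 0` is positive at a
minimizer of `u`, and `μ` charges every nonempty open set. Finally, raising `s` by `d` raises `min s u + w` by at most `d` while its minimum rises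
by exactly `d`, so the oscillation does not increase.
-/

theorem minF_eq_of_forall_le {X : Type*} {f : X → ℝ} {c : ℝ} (hle : ∀ x, c ≤ f x) {x₀ : X}
    (hx₀ : f x₀ = c) : minF f = c :=
  IsLeast.csInf_eq ⟨⟨x₀, hx₀⟩, by rintro _ ⟨x, rfl⟩; exact hle x⟩

theorem maxF_le {X : Type*} [Nonempty X] {f : X → ℝ} {c : ℝ} (hle : ∀ x, f x ≤ c) :
    maxF f ≤ c :=
  csSup_le (range_nonempty f) (by rintro _ ⟨x, rfl⟩; exact hle x)

section CompactSpace

variable {X : Type*} [TopologicalSpace X] [CompactSpace X] {f g : X → ℝ}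

theorem minF_le (hf : Continuous f) (x : X) : minF f ≤ f x :=
  csInf_le (isCompact_range hf).bddBelow (mem_range_self x)

theorem le_maxF (hf : Continuous f) (x : X) : f x ≤ maxF f :=
  le_csSup (isCompact_range hf).bddAbove (mem_range_self x)

theorem exists_eq_minF [Nonempty X] (hf : Continuous f) : ∃ x, f x = minF f :=
  (isCompact_range hf).sInf_mem (range_nonempty f)

theorem maxF_le_maxF_add [Nonempty X] (hg : Continuous g) {a : ℝ} (hle : ∀ x, f x ≤ g x + a) :
    maxF f ≤ maxF g + a :=
  maxF_le fun x => (hle x).trans (add_le_add_left (le_maxF hg x) a)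

theorem minF_add_minF_lt_minF_add [Nonempty X] (hf : Continuous f) (hg : Continuous g)
    (hdisj : argminF f ∩ argminF g = ∅) :
    minF f + minF g < minF (f + g) := by
  obtain ⟨x₀, hx₀⟩ := exists_eq_minF (hf.add hg)
  rw [← hx₀, Pi.add_apply]
  have hf₀ := minF_le hf x₀
  have hg₀ := minF_le hg x₀
  by_contra! hle
  have hx₀mem : x₀ ∈ argminF f ∩ argminF g :=
    ⟨show f x₀ = minF f by linarith, show g x₀ = minF g by linarith⟩
  simp [hdisj] at hx₀mem

end CompactSpace

section TropicalPath

variable {X : Type*} [TopologicalSpace X] [CompactSpace X] {u w : X → ℝ} {s : ℝ}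

theorem min_add_eq_of_mem_argminF (hu : Continuous u) (hw : Continuous w)
    (hs : s ≤ minF (u + w)) (hwmin : minF w = 0) {x : X} (hx : x ∈ argminF w) :
    min s (u x) + w x = s := by
  have hwx : w x = 0 := hx.trans hwmin
  have huw : minF (u + w) ≤ u x + w x := minF_le (hu.add hw) x
  rw [hwx, add_zero, min_eq_left (by linarith)]

theorem minF_min_add_eq [Nonempty X] (hu : Continuous u) (hw : Continuous w)
    (hs : s ≤ minF (u + w)) (hwmin : minF w = 0) :
    minF (fun x => min s (u x) + w x) = s := by
  obtain ⟨xw, hxw⟩ := exists_eq_minF hw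
  refine minF_eq_of_forall_le (fun x => ?_) (min_add_eq_of_mem_argminF hu hw hs hwmin hxw)
  have hw0 : 0 ≤ w x := hwmin ▸ minF_le hw x
  have huw : minF (u + w) ≤ u x + w x := minF_le (hu.add hw) x
  rcases le_total s (u x) with h | h
  · rw [min_eq_left h]; linarith
  · rw [min_eq_right h]; linarith

theorem argminF_subset_argminF_min_add [Nonempty X] (hu : Continuous u) (hw : Continuous w)
    (hs : s ≤ minF (u + w)) (hwmin : minF w = 0) :
    argminF w ⊆ argminF (fun x => min s (u x) + w x) := fun _ hx =>
  (min_add_eq_of_mem_argminF hu hw hs hwmin hx).trans (minF_min_add_eq hu hw hs hwmin).symm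

theorem normF_min_add_eq [Nonempty X] (hu : Continuous u) (hw : Continuous w)
    (hs : s ≤ minF (u + w)) (hwmin : minF w = 0) (x : X) :
    normF (fun x => min s (u x) + w x) x = w x - max (s - u x) 0 := by
  rw [normF, minF_min_add_eq hu hw hs hwmin]
  rcases le_total s (u x) with h | h
  · rw [min_eq_left h, max_eq_right (by linarith)]; ring
  · rw [min_eq_right h, max_eq_left (by linarith)]; ring

theorem maxF_min_add_sub_le_of_le [Nonempty X] (hu : Continuous u) (hw : Continuous w) {s' : ℝ}
    (hss' : s ≤ s') :
    maxF (fun x => min s' (u x) + w x) - s' ≤ maxF (fun x => min s (u x) + w x) - s := by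
  have hle : maxF (fun x => min s' (u x) + w x) ≤
      maxF (fun x => min s (u x) + w x) + (s' - s) := by
    refine maxF_le_maxF_add (g := fun x => min s (u x) + w x)
      ((continuous_const.min hu).add hw) fun x => ?_
    have : min s' (u x) ≤ min s (u x) + (s' - s) := by
      rw [← min_add_add_right]
      exact min_le_min (by linarith) (by linarith)
    linarith
  linarith

end TropicalPath

section Integral

variable {X : Type*} [TopologicalSpace X] [CompactSpace X] [MeasurableSpace X]
  [OpensMeasurableSpace X] {μ : Measure X} [IsFiniteMeasure μ] {u : X → ℝ}

theorem Continuous.integrable_of_compactSpace {f : X → ℝ} (hf : Continuous f) :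
    Integrable f μ :=
  hf.integrable_of_hasCompactSupport (HasCompactSupport.of_compactSpace f)

theorem strictMonoOn_integral_max_sub [Nonempty X] [μ.IsOpenPosMeasure] (hu : Continuous u) :
    StrictMonoOn (fun s => ∫ x, max (s - u x) 0 ∂μ) (Ici (minF u)) := by
  intro s hs s' _ hss'
  obtain ⟨x₀, hx₀⟩ := exists_eq_minF hu
  have hcont : ∀ a : ℝ, Continuous fun x => max (a - u x) 0 :=
    fun a => (continuous_const.sub hu).max continuous_const
  have hpos : 0 < ∫ x, (max (s' - u x) 0 - max (s - u x) 0) ∂μ := by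
    refine integral_pos_of_integrable_nonneg_nonzero (x := x₀) ((hcont s').sub (hcont s))
      ((hcont s').sub (hcont s)).integrable_of_compactSpace
      (fun x => sub_nonneg.mpr (max_le_max (by linarith) le_rfl)) ?_
    have hs₀ : u x₀ ≤ s := hx₀ ▸ hs
    rw [max_eq_left (by linarith), max_eq_left (by linarith)]
    linarith
  rw [integral_sub (hcont s').integrable_of_compactSpace (hcont s).integrable_of_compactSpace]
    at hpos
  simp only
  linarith

end Integral

theorem stmt_7_general {X : Type*} [MetricSpace X] [CompactSpace X] [Nonempty X]
    [MeasurableSpace X] [BorelSpace X]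
    (μ : Measure X) [IsFiniteMeasure μ]
    (hfull : ∀ U : Set X, IsOpen U → U.Nonempty → 0 < μ U)
    (u w : X → ℝ) (hu : Continuous u) (hw : Continuous w)
    (l : ℝ) (hl : 0 < l) (humin : minF u = 0)
    (hwmin : minF w = 0)
    (hdisj : argminF u ∩ argminF w = ∅) :
    ∃ δ₀ : ℝ, 0 < δ₀ ∧ δ₀ ≤ l ∧
      ((∀ t ∈ Set.Icc (0:ℝ) (δ₀ / l),
          minF (fun x => min (t * l) (u x) + w x) = t * l) ∧
       (∀ t ∈ Set.Icc (0:ℝ) (δ₀ / l),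
          argminF w ⊆ argminF (fun x => min (t * l) (u x) + w x)) ∧
       (∀ t ∈ Set.Icc (0:ℝ) (δ₀ / l), ∀ x : X,
          normF (fun x => min (t * l) (u x) + w x) x = w x - max (t * l - u x) 0) ∧
       (∀ t ∈ Set.Icc (0:ℝ) (δ₀ / l),
          (∫ x, normF (fun x => min (t * l) (u x) + w x) x ∂μ) =
            (∫ x, w x ∂μ) - ∫ x, max (t * l - u x) 0 ∂μ) ∧
       StrictAntiOn
         (fun t => ∫ x, normF (fun x => min (t * l) (u x) + w x) x ∂μ)
         (Set.Icc (0:ℝ) (δ₀ / l)) ∧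
       AntitoneOn (fun t => oscF (fun x => min (t * l) (u x) + w x))
         (Set.Icc (0:ℝ) (δ₀ / l))) := by
  have : μ.IsOpenPosMeasure := ⟨fun U hU hne => (hfull U hU hne).ne'⟩
  have hc : 0 < minF (u + w) := by
    simpa [humin, hwmin] using minF_add_minF_lt_minF_add hu hw hdisj
  refine ⟨min (minF (u + w)) l, lt_min hc hl, min_le_right _ _, ?_⟩
  set I := Icc (0 : ℝ) (min (minF (u + w)) l / l)
  have hs : ∀ t ∈ I, t * l ≤ minF (u + w) :=
    fun t ht => ((le_div_iff₀ hl).mp ht.2).trans (min_le_left _ _)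
  have hmin t (ht : t ∈ I) := minF_min_add_eq hu hw (hs t ht) hwmin
  have hnorm t (ht : t ∈ I) := normF_min_add_eq hu hw (hs t ht) hwmin
  have hint : ∀ t ∈ I, ∫ x, normF (fun x => min (t * l) (u x) + w x) x ∂μ =
      (∫ x, w x ∂μ) - ∫ x, max (t * l - u x) 0 ∂μ := fun t ht => by
    rw [funext (hnorm t ht)]
    exact integral_sub hw.integrable_of_compactSpace
      ((continuous_const.sub hu).max continuous_const).integrable_of_compactSpace
  refine ⟨hmin, fun t ht => argminF_subset_argminF_min_add hu hw (hs t ht) hwmin, hnorm, hint,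
    fun t ht t' ht' htt' => ?_, fun t ht t' ht' htt' => ?_⟩
  · have hmono := strictMonoOn_integral_max_sub (μ := μ) hu
      (show t * l ∈ Ici (minF u) from humin ▸ mul_nonneg ht.1 hl.le)
      (show t' * l ∈ Ici (minF u) from humin ▸ mul_nonneg ht'.1 hl.le)
      (mul_lt_mul_of_pos_right htt' hl)
    simp only [hint t ht, hint t' ht']
    linarith
  · simpa only [oscF, hmin t ht, hmin t' ht'] using
      maxF_min_add_sub_le_of_le hu hw (mul_le_mul_of_nonneg_right htt' hl.le)

theorem stmt_7 {X : Type*} [MetricSpace X] [CompactSpace X] [Nonempty X]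
    [MeasurableSpace X] [BorelSpace X]
    (μ : Measure X) [IsFiniteMeasure μ]
    (hfull : ∀ U : Set X, IsOpen U → U.Nonempty → 0 < μ U)
    (u w : X → ℝ) (hu : Continuous u) (hw : Continuous w)
    (l : ℝ) (hl : 0 < l) (humin : minF u = 0) (humax : maxF u = l)
    (hwmin : minF w = 0)
    (hdisj : argminF u ∩ argminF w = ∅) :
    ∃ δ₀ : ℝ, 0 < δ₀ ∧ δ₀ ≤ l ∧
      ((∀ t ∈ Set.Icc (0:ℝ) (δ₀ / l),
          minF (fun x => min (t * l) (u x) + w x) = t * l) ∧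
       (∀ t ∈ Set.Icc (0:ℝ) (δ₀ / l),
          argminF w ⊆ argminF (fun x => min (t * l) (u x) + w x)) ∧
       (∀ t ∈ Set.Icc (0:ℝ) (δ₀ / l), ∀ x : X,
          normF (fun x => min (t * l) (u x) + w x) x = w x - max (t * l - u x) 0) ∧
       (∀ t ∈ Set.Icc (0:ℝ) (δ₀ / l),
          (∫ x, normF (fun x => min (t * l) (u x) + w x) x ∂μ) =
            (∫ x, w x ∂μ) - ∫ x, max (t * l - u x) 0 ∂μ) ∧
       StrictAntiOn
         (fun t => ∫ x, normF (fun x => min (t * l) (u x) + w x) x ∂μ)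
         (Set.Icc (0:ℝ) (δ₀ / l)) ∧
       AntitoneOn (fun t => oscF (fun x => min (t * l) (u x) + w x))
         (Set.Icc (0:ℝ) (δ₀ / l))) :=
  stmt_7_general μ hfull u w hu hw l hl humin hwmin hdisj
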